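/- arXiv:1502.06672 — 5 statements merged into one kernel-verified Lean document; each statement's English description precedes it below -/
import Mathlib

section
/- For a bounded nonnegative random variable X that is not almost surely constant, the effective capacity C(θ) = -(1/θ) log E[e^{-θX}] is strictly decreasing in θ for θ > 0; that is, if θ₁ > θ₂ > 0 then C(θ₁) < C(θ₂). -/
open Finset Real

/-!
With `Y = exp (-X)` we have `C(θ) = -log (E[Y ^ θ]) ^ (1 / θ)`, so it suffices that the power
mean `θ ↦ (E[Y ^ θ]) ^ (1 / θ)` is strictly increasing (strict Lyapunov inequality). For
`0 < a < b` this is strict Jensen for the strictly convex map `y ↦ y ^ (b / a)` applied to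
`Y ^ a`, which is not almost surely constant.
-/

section

variable {ι : Type*} {t : Finset ι} {w : ι → ℝ}

theorem rpow_sum_lt_sum_rpow {Y : ι → ℝ} {p : ℝ} (hp : 1 < p)
    (h₀ : ∀ i ∈ t, 0 ≤ w i) (h₁ : ∑ i ∈ t, w i = 1) (hY : ∀ i ∈ t, 0 ≤ Y i)
    (hne : ∃ j ∈ t, ∃ k ∈ t, w j ≠ 0 ∧ w k ≠ 0 ∧ Y j ≠ Y k) :
    (∑ i ∈ t, w i * Y i) ^ p < ∑ i ∈ t, w i * Y i ^ p :=
  ((strictConvexOn_rpow hp).map_sum_lt_iff_of_nonneg h₀ h₁ hY).2 hne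

theorem strictMonoOn_inv_mul_log_sum_exp {x : ι → ℝ}
    (h₀ : ∀ i ∈ t, 0 ≤ w i) (h₁ : ∑ i ∈ t, w i = 1)
    (hne : ∃ j ∈ t, ∃ k ∈ t, w j ≠ 0 ∧ w k ≠ 0 ∧ x j ≠ x k) :
    StrictMonoOn (fun θ ↦ θ⁻¹ * log (∑ i ∈ t, w i * exp (θ * x i))) (Set.Ioi 0) := by
  intro a (ha : 0 < a) b (hb : 0 < b) hab
  obtain ⟨j, hj, k, hk, hwj, hwk, hx⟩ := hne
  have hsum_pos : ∀ θ, 0 < ∑ i ∈ t, w i * exp (θ * x i) := fun θ ↦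
    sum_pos' (fun i hi ↦ mul_nonneg (h₀ i hi) (exp_pos _).le)
      ⟨j, hj, mul_pos ((h₀ j hj).lt_of_ne' hwj) (exp_pos _)⟩
  have hjensen :
      (∑ i ∈ t, w i * exp (a * x i)) ^ (b / a) < ∑ i ∈ t, w i * exp (b * x i) := by
    have hpow : ∀ i, exp (a * x i) ^ (b / a) = exp (b * x i) := fun i ↦ by
      rw [← exp_mul]; field_simp
    have hexp_ne : exp (a * x j) ≠ exp (a * x k) := fun h ↦
      hx (mul_left_cancel₀ ha.ne' (exp_injective h))
    simpa only [hpow] using rpow_sum_lt_sum_rpow (Y := fun i ↦ exp (a * x i))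
      ((one_lt_div ha).2 hab) h₀ h₁ (fun i _ ↦ (exp_pos _).le)
      ⟨j, hj, k, hk, hwj, hwk, hexp_ne⟩
  have hlog :
      b / a * log (∑ i ∈ t, w i * exp (a * x i)) < log (∑ i ∈ t, w i * exp (b * x i)) := by
    simpa only [log_rpow (hsum_pos a)] using
      log_lt_log (rpow_pos_of_pos (hsum_pos a) _) hjensen
  calc a⁻¹ * log (∑ i ∈ t, w i * exp (a * x i))
      = b⁻¹ * (b / a * log (∑ i ∈ t, w i * exp (a * x i))) := by field_simp
    _ < b⁻¹ * log (∑ i ∈ t, w i * exp (b * x i)) :=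
      mul_lt_mul_of_pos_left hlog (inv_pos.2 hb)

end

theorem effective_capacity_strictly_decreasing_general
    (K : ℕ) (w s : Fin K → ℝ)
    (hw : ∀ k, 0 ≤ w k) (hsum : ∑ k, w k = 1)
    (hnotconst : ∃ i j, 0 < w i ∧ 0 < w j ∧ s i ≠ s j)
    (θ₁ θ₂ : ℝ) (h2 : 0 < θ₂) (h21 : θ₂ < θ₁) :
    -(1 / θ₁) * Real.log (∑ k, w k * Real.exp (-θ₁ * s k)) <
      -(1 / θ₂) * Real.log (∑ k, w k * Real.exp (-θ₂ * s k)) := by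
  obtain ⟨i, j, hwi, hwj, hs⟩ := hnotconst
  have hmono := strictMonoOn_inv_mul_log_sum_exp (t := univ) (x := fun k ↦ -s k)
    (fun k _ ↦ hw k) hsum
    ⟨i, mem_univ i, j, mem_univ j, hwi.ne', hwj.ne', neg_injective.ne hs⟩
    (Set.mem_Ioi.2 h2) (Set.mem_Ioi.2 (h2.trans h21)) h21
  simp only [← neg_mul_comm, ← one_div] at hmono
  linarith

/-- Effective capacity of a finite-valued random variable (values `s k` with
probabilities `w k`) is strictly decreasing in the QoS index `θ`, provided the
variable is nonnegative (hence bounded, being finite-valued) and not a.s. constant. -/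
theorem effective_capacity_strictly_decreasing
    (K : ℕ) (w s : Fin K → ℝ)
    (hw : ∀ k, 0 ≤ w k) (hsum : ∑ k, w k = 1)
    (hnonneg : ∀ k, 0 ≤ s k)
    (hnotconst : ∃ i j, 0 < w i ∧ 0 < w j ∧ s i ≠ s j)
    (θ₁ θ₂ : ℝ) (h2 : 0 < θ₂) (h21 : θ₂ < θ₁) :
    -(1 / θ₁) * Real.log (∑ k, w k * Real.exp (-θ₁ * s k)) <
      -(1 / θ₂) * Real.log (∑ k, w k * Real.exp (-θ₂ * s k)) :=
  effective_capacity_strictly_decreasing_general K w s hw hsum hnotconst θ₁ θ₂ h2 h21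
end

section
/- In the congestion-type game where player n's payoff from choosing channel m with congestion level c is g_n(m, c) for functions g_n(m, c) = π_m · e^{-θ_n s_m / c} with common θ (θ_n = θ for all n), the function φ(a) = Σ_{m=1}^{M} Σ_{l=1}^{c_m(a)} π_m e^{-θ s_m / l} is an exact potential: for any unilateral deviation of player n from a_n to a'_n, v_n(a'_n, a_{-n}) - v_n(a_n, a_{-n}) = φ(a'_n, a_{-n}) - φ(a_n, a_{-n}), where v_n(a) = π_{a_n} e^{-θ s_{a_n} / c_{a_n}(a)}. -/
open Finset Real

/-- Number of players choosing channel `m` under the profile `a`. -/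
def chLoad {N M : ℕ} (a : Fin N → Fin M) (m : Fin M) : ℕ :=
  (Finset.univ.filter (fun k => a k = m)).card

/-- Cost-type value of player `n`: v_n(a) = π_{a_n} · e^{-θ s_{a_n} / c_{a_n}(a)}. -/
noncomputable def chVal {N M : ℕ} (p s : Fin M → ℝ) (θ : ℝ) (a : Fin N → Fin M) (n : Fin N) : ℝ :=
  p (a n) * Real.exp (-θ * s (a n) / (chLoad a (a n) : ℝ))

/-- Potential φ(a) = Σ_m Σ_{l=1}^{c_m(a)} π_m e^{-θ s_m / l}. -/
noncomputable def chValPot {N M : ℕ} (p s : Fin M → ℝ) (θ : ℝ) (a : Fin N → Fin M) : ℝ :=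
  ∑ m, ∑ l ∈ Finset.range (chLoad a m), p m * Real.exp (-θ * s m / ((l : ℝ) + 1))

lemma chLoad_update_other {N M : ℕ} (a : Fin N → Fin M) (n : Fin N) (a' : Fin M)
    (m : Fin M) (h1 : m ≠ a n) (h2 : m ≠ a') :
    chLoad (Function.update a n a') m = chLoad a m := by
  unfold chLoad
  congr 1
  apply Finset.filter_congr
  intro k _
  rcases eq_or_ne k n with rfl | hk
  · simp [Function.update_self, h1.symm, h2.symm, eq_comm]
  · simp [Function.update_of_ne hk]

lemma chLoad_update_new {N M : ℕ} (a : Fin N → Fin M) (n : Fin N) (a' : Fin M)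
    (h : a n ≠ a') :
    chLoad (Function.update a n a') a' = chLoad a a' + 1 := by
  unfold chLoad
  have : (Finset.univ.filter (fun k => Function.update a n a' k = a')) =
      insert n (Finset.univ.filter (fun k => a k = a')) := by
    ext k
    rcases eq_or_ne k n with rfl | hk
    · simp [Function.update_self, h]
    · simp [Function.update_of_ne hk, hk]
  rw [this, Finset.card_insert_of_notMem (by simp [h])]

lemma chLoad_update_old {N M : ℕ} (a : Fin N → Fin M) (n : Fin N) (a' : Fin M)
    (h : a n ≠ a') :
    chLoad a (a n) = chLoad (Function.update a n a') (a n) + 1 := by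
  unfold chLoad
  have : (Finset.univ.filter (fun k => a k = a n)) =
      insert n (Finset.univ.filter (fun k => Function.update a n a' k = a n)) := by
    ext k
    rcases eq_or_ne k n with rfl | hk
    · simp [Function.update_self, h.symm]
    · simp [Function.update_of_ne hk, hk]
  rw [this, Finset.card_insert_of_notMem (by simp [Function.update_self, h.symm])]

/-- The congestion-type game with values v_n(a) = π_{a_n} e^{-θ s_{a_n}/c_{a_n}(a)}
(common QoS index θ) admits φ as an exact potential. -/
theorem qos_game_exact_potential_for_v
    (N M : ℕ) (p s : Fin M → ℝ) (hp : ∀ m, 0 < p m) (hs : ∀ m, 0 ≤ s m)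
    (θ : ℝ) (hθ : 0 < θ)
    (a : Fin N → Fin M) (n : Fin N) (a' : Fin M) :
    chVal p s θ (Function.update a n a') n - chVal p s θ a n =
      chValPot p s θ (Function.update a n a') - chValPot p s θ a := by
  rcases eq_or_ne (a n) a' with h | h
  · rw [← h, Function.update_eq_self]
    ring
  set b := Function.update a n a' with hb
  have hbn : b n = a' := Function.update_self n a' a
  have hnew : chLoad b a' = chLoad a a' + 1 := chLoad_update_new a n a' h
  have hold : chLoad a (a n) = chLoad b (a n) + 1 := chLoad_update_old a n a' h
  have hφ : chValPot p s θ b - chValPot p s θ a =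
      (p a' * Real.exp (-θ * s a' / ((chLoad a a' : ℝ) + 1)))
      - (p (a n) * Real.exp (-θ * s (a n) / ((chLoad b (a n) : ℝ) + 1))) := by
    unfold chValPot
    rw [← Finset.sum_sub_distrib]
    rw [Finset.sum_eq_add_of_mem a' (a n) (Finset.mem_univ _) (Finset.mem_univ _)
      (Ne.symm h) ?_]
    · rw [hnew, Finset.sum_range_succ, hold, Finset.sum_range_succ]
      push_cast
      ring
    · intro c _ hc
      rw [chLoad_update_other a n a' c hc.2 hc.1]
      ring
  rw [hφ]
  unfold chVal
  rw [hbn, hnew, hold]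
  push_cast
  ring
end

section
/- Every finite ordinal potential game possesses at least one pure strategy Nash equilibrium; in particular, any action profile maximizing the ordinal potential function is a pure Nash equilibrium. -/
/-- Every finite ordinal potential game has a pure strategy Nash equilibrium;
in particular, every maximizer of the ordinal potential is a pure Nash equilibrium. -/
theorem ordinal_potential_game_has_pure_NE
    {ι : Type*} [Fintype ι] [DecidableEq ι]
    (A : ι → Type*) [∀ i, Fintype (A i)] [∀ i, Nonempty (A i)]
    (u : ι → (∀ i, A i) → ℝ) (φ : (∀ i, A i) → ℝ)
    (hop : ∀ (n : ι) (a : ∀ i, A i) (a' : A n),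
      0 < u n (Function.update a n a') - u n a ↔
        0 < φ (Function.update a n a') - φ a) :
    (∀ a : ∀ i, A i, (∀ b, φ b ≤ φ a) →
        ∀ (n : ι) (a' : A n), u n (Function.update a n a') ≤ u n a) ∧
    (∃ a : ∀ i, A i, ∀ (n : ι) (a' : A n), u n (Function.update a n a') ≤ u n a) := by
  have key : ∀ a : ∀ i, A i, (∀ b, φ b ≤ φ a) →
      ∀ (n : ι) (a' : A n), u n (Function.update a n a') ≤ u n a := by
    intro a hmax n a'
    by_contra h
    push_neg at h
    have h1 : 0 < u n (Function.update a n a') - u n a := by linarith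
    have h2 := (hop n a a').mp h1
    have := hmax (Function.update a n a')
    linarith
  refine ⟨key, ?_⟩
  obtain ⟨a, ha⟩ := Finite.exists_max φ
  exact ⟨a, key a (fun b => ha b) ⟩
end

section
/- Every finite game admitting an exact potential function possesses the finite improvement property: every sequence of strict unilateral improvement steps is finite, and hence terminates at a pure strategy Nash equilibrium. -/
/-- Every finite exact potential game has the finite improvement property: there is
no infinite sequence of strict unilateral improvement steps, and consequently a
pure strategy Nash equilibrium exists. -/
theorem exact_potential_game_finite_improvement_property
    {ι : Type*} [Fintype ι] [DecidableEq ι]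
    (A : ι → Type*) [∀ i, Fintype (A i)] [∀ i, Nonempty (A i)]
    (u : ι → (∀ i, A i) → ℝ) (φ : (∀ i, A i) → ℝ)
    (hexact : ∀ (n : ι) (a : ∀ i, A i) (a' : A n),
      u n (Function.update a n a') - u n a =
        φ (Function.update a n a') - φ a) :
    (¬ ∃ seq : ℕ → (∀ i, A i), ∀ t, ∃ (n : ι) (a' : A n),
        seq (t + 1) = Function.update (seq t) n a' ∧
          u n (seq (t + 1)) > u n (seq t)) ∧
    (∃ a : ∀ i, A i, ∀ (n : ι) (a' : A n), u n (Function.update a n a') ≤ u n a) := by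
  constructor
  · rintro ⟨seq, hseq⟩
    have hmono : StrictMono (fun t => φ (seq t)) := by
      apply strictMono_nat_of_lt_succ
      intro t
      obtain ⟨n, a', heq, hlt⟩ := hseq t
      have := hexact n (seq t) a'
      rw [← heq] at this
      linarith
    have hinj : Function.Injective seq := fun s t h => by
      have := hmono.injective (a₁ := s) (a₂ := t) (by simp [h])
      exact this
    exact (Finite.of_injective seq hinj).false
  · obtain ⟨a, ha⟩ := Finite.exists_max φ
    refine ⟨a, fun n a' => ?_⟩
    have := hexact n a a'
    have := ha (Function.update a n a')
    linarith
end

section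
/- If two finite-valued random variables X and Y satisfy E[X] = E[Y] and Var(X) < Var(Y), then there exists θ₀ > 0 such that for all θ ∈ (0, θ₀), the effective capacity of X exceeds that of Y: -(1/θ) log E[e^{-θX}] > -(1/θ) log E[e^{-θY}]. -/
open Finset Real

lemma exp_taylor2 (t : ℝ) (ht : |t| ≤ 1) :
    |Real.exp t - (1 + t + t ^ 2 / 2)| ≤ |t| ^ 3 * (2 / 9) := by
  have h := Real.exp_bound ht (n := 3) (by norm_num)
  have hs : ∑ i ∈ Finset.range 3, t ^ i / (i.factorial : ℝ) = 1 + t + t ^ 2 / 2 := by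
    simp [Finset.sum_range_succ]
  rw [hs] at h
  calc |Real.exp t - (1 + t + t ^ 2 / 2)|
      ≤ |t| ^ 3 * (((3:ℕ).succ : ℝ) / ((3:ℕ).factorial * (3:ℕ))) := h
    _ = |t| ^ 3 * (2 / 9) := by norm_num [Nat.factorial]

set_option maxHeartbeats 1000000 in
/-- Among finite-valued random variables with equal means, the one with smaller
variance has strictly larger effective capacity for all sufficiently small θ > 0. -/
theorem smaller_variance_larger_effective_capacity
    (K L : ℕ) (w : Fin K → ℝ) (x : Fin K → ℝ) (v : Fin L → ℝ) (y : Fin L → ℝ)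
    (hw : ∀ k, 0 ≤ w k) (hwsum : ∑ k, w k = 1)
    (hv : ∀ l, 0 ≤ v l) (hvsum : ∑ l, v l = 1)
    (hmean : ∑ k, w k * x k = ∑ l, v l * y l)
    (hvar : (∑ k, w k * (x k) ^ 2) - (∑ k, w k * x k) ^ 2 <
      (∑ l, v l * (y l) ^ 2) - (∑ l, v l * y l) ^ 2) :
    ∃ θ₀ > 0, ∀ θ : ℝ, 0 < θ → θ < θ₀ →
      -(1 / θ) * Real.log (∑ l, v l * Real.exp (-θ * y l)) <
        -(1 / θ) * Real.log (∑ k, w k * Real.exp (-θ * x k)) := by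
  set EX := ∑ k, w k * x k with hEX
  set EY := ∑ l, v l * y l with hEY
  set EX2 := ∑ k, w k * x k ^ 2 with hEX2
  set EY2 := ∑ l, v l * y l ^ 2 with hEY2
  have hD : 0 < EY2 - EX2 := by
    have h2 : EX ^ 2 = EY ^ 2 := by rw [hmean]
    linarith
  set D := EY2 - EX2 with hDdef
  set M := 1 + ∑ k, |x k| + ∑ l, |y l| with hM
  have habsx : (0:ℝ) ≤ ∑ k, |x k| := Finset.sum_nonneg fun k _ => abs_nonneg _
  have habsy : (0:ℝ) ≤ ∑ l, |y l| := Finset.sum_nonneg fun l _ => abs_nonneg _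
  have hM1 : (1:ℝ) ≤ M := by simp only [hM]; linarith
  have hMpos : (0:ℝ) < M := by linarith
  have hMx : ∀ k, |x k| ≤ M := by
    intro k
    have : |x k| ≤ ∑ k, |x k| := Finset.single_le_sum (fun k _ => abs_nonneg (x k)) (Finset.mem_univ k)
    simp only [hM]; linarith
  have hMy : ∀ l, |y l| ≤ M := by
    intro l
    have : |y l| ≤ ∑ l, |y l| := Finset.single_le_sum (fun l _ => abs_nonneg (y l)) (Finset.mem_univ l)
    simp only [hM]; linarith
  set Cx := ∑ k, w k * |x k| ^ 3 with hCxdef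
  set Cy := ∑ l, v l * |y l| ^ 3 with hCydef
  have hCx : 0 ≤ Cx := Finset.sum_nonneg fun k _ => mul_nonneg (hw k) (by positivity)
  have hCy : 0 ≤ Cy := Finset.sum_nonneg fun l _ => mul_nonneg (hv l) (by positivity)
  set C := (2/9) * (Cx + Cy) with hCdef
  have hC : 0 ≤ C := by positivity
  refine ⟨min (1/M) (D/(2*(C+1))), lt_min (by positivity) (by positivity), ?_⟩
  intro θ hθ hθ₀
  have hθM : θ < 1/M := lt_of_lt_of_le hθ₀ (min_le_left _ _)
  have hθD : θ < D/(2*(C+1)) := lt_of_lt_of_le hθ₀ (min_le_right _ _)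
  -- remainder bound for X
  have key : ∀ (N : ℕ) (p : Fin N → ℝ) (z : Fin N → ℝ), (∀ i, 0 ≤ p i) → (∑ i, p i = 1) →
      (∀ i, |z i| ≤ M) →
      |∑ i, p i * Real.exp (-θ * z i) -
        (1 - θ * (∑ i, p i * z i) + θ ^ 2 / 2 * (∑ i, p i * z i ^ 2))| ≤
        θ ^ 3 * (2/9) * (∑ i, p i * |z i| ^ 3) := by
    intro N p z hp hpsum hz
    have expand : ∑ i, p i * Real.exp (-θ * z i) -
        (1 - θ * (∑ i, p i * z i) + θ ^ 2 / 2 * (∑ i, p i * z i ^ 2))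
        = ∑ i, p i * (Real.exp (-θ * z i) - (1 + (-θ * z i) + (-θ * z i) ^ 2 / 2)) := by
      have : ∀ i : Fin N, p i * (Real.exp (-θ * z i) - (1 + (-θ * z i) + (-θ * z i) ^ 2 / 2))
          = p i * Real.exp (-θ * z i) - p i + θ * (p i * z i) - θ ^ 2 / 2 * (p i * z i ^ 2) := by
        intro i; ring
      rw [Finset.sum_congr rfl fun i _ => this i]
      simp only [Finset.sum_sub_distrib, Finset.sum_add_distrib, ← Finset.mul_sum, hpsum]
      ring
    rw [expand]
    calc |∑ i, p i * (Real.exp (-θ * z i) - (1 + (-θ * z i) + (-θ * z i) ^ 2 / 2))|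
        ≤ ∑ i, |p i * (Real.exp (-θ * z i) - (1 + (-θ * z i) + (-θ * z i) ^ 2 / 2))| :=
          Finset.abs_sum_le_sum_abs _ _
      _ ≤ ∑ i, p i * (θ ^ 3 * (2/9) * |z i| ^ 3) := by
          apply Finset.sum_le_sum
          intro i _
          rw [abs_mul, abs_of_nonneg (hp i)]
          apply mul_le_mul_of_nonneg_left _ (hp i)
          have ht1 : |(-θ * z i)| ≤ 1 := by
            rw [abs_mul, abs_neg, abs_of_pos hθ]
            have h1 : θ * |z i| ≤ θ * M := mul_le_mul_of_nonneg_left (hz i) hθ.le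
            have h2 : θ * M < 1 := by
              have := mul_lt_mul_of_pos_right hθM hMpos
              rwa [one_div, inv_mul_cancel₀ (ne_of_gt hMpos)] at this
            linarith
          have := exp_taylor2 (-θ * z i) ht1
          calc |Real.exp (-θ * z i) - (1 + (-θ * z i) + (-θ * z i) ^ 2 / 2)|
              ≤ |(-θ * z i)| ^ 3 * (2/9) := this
            _ = θ ^ 3 * (2/9) * |z i| ^ 3 := by
                rw [abs_mul, abs_neg, abs_of_pos hθ]; ring
      _ = θ ^ 3 * (2/9) * (∑ i, p i * |z i| ^ 3) := by
          rw [Finset.mul_sum]; apply Finset.sum_congr rfl; intro i _; ring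
  have keyX := key K w x hw hwsum hMx
  have keyY := key L v y hv hvsum hMy
  set A := ∑ k, w k * Real.exp (-θ * x k) with hA
  set B := ∑ l, v l * Real.exp (-θ * y l) with hB
  have hAB : A < B := by
    rw [abs_le] at keyX keyY
    have hθC : θ * (2 * (C + 1)) < D := by
      rw [lt_div_iff₀ (by positivity)] at hθD
      linarith [hθD]
    have h0 : θ * C ≤ θ * (C + 1) := mul_le_mul_of_nonneg_left (by linarith) hθ.le
    have h1 : θ * C < D / 2 := by linarith
    have h2 : θ ^ 2 * (θ * C) < θ ^ 2 * (D / 2) :=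
      mul_lt_mul_of_pos_left h1 (by positivity)
    have heq : θ ^ 3 * (2/9) * Cx + θ ^ 3 * (2/9) * Cy = θ ^ 2 * (θ * C) := by
      rw [hCdef]; ring
    have h3 : θ ^ 2 / 2 * EY2 - θ ^ 2 / 2 * EX2 = θ ^ 2 * (D / 2) := by
      rw [hDdef]; ring
    have h4 : θ * EX = θ * EY := by rw [hmean]
    linarith [keyX.1, keyX.2, keyY.1, keyY.2, heq, h2, h3, h4]
  have hApos : 0 < A := by
    obtain ⟨k, hk⟩ : ∃ k, 0 < w k := by
      by_contra h
      push_neg at h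
      have : ∑ k, w k ≤ 0 := Finset.sum_nonpos fun k _ => h k
      linarith [hwsum]
    exact Finset.sum_pos' (fun k _ => mul_nonneg (hw k) (Real.exp_pos _).le)
      ⟨k, Finset.mem_univ k, mul_pos hk (Real.exp_pos _)⟩
  have hlog : Real.log A < Real.log B := Real.log_lt_log hApos hAB
  have hneg : -(1/θ) < 0 := by
    have : 0 < 1/θ := by positivity
    linarith
  exact mul_lt_mul_of_neg_left hlog hneg
end
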